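/- arXiv:0706.1405 — 3 statements merged into one kernel-verified Lean document; each statement's English description precedes it below -/
import Mathlib

section
/- The absolute order on a finite Coxeter group W is graded with rank function ℓ_T: if u ⪯ v then every maximal chain from u to v in the interval [u,v] has length ℓ_T(v) − ℓ_T(u). -/
variable {B W : Type*} [Group W] {M : CoxeterMatrix B}

/-- The reflection length `ℓ_T w`: the minimal number of reflections of the
Coxeter system whose product is `w`. -/
noncomputable def absLen (cs : CoxeterSystem M W) (w : W) : ℕ :=
  sInf {k | ∃ l : List W, l.length = k ∧ (∀ t ∈ l, cs.IsReflection t) ∧ l.prod = w}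

/-- The absolute order: `u ⪯ v` iff `ℓ_T u + ℓ_T (u⁻¹ v) = ℓ_T v`. -/
def absLe (cs : CoxeterSystem M W) (u v : W) : Prop :=
  absLen cs u + absLen cs (u⁻¹ * v) = absLen cs v

/-- `a` is covered by `b` within the interval `[u, v]` of the absolute order. -/
def absCovByIn (cs : CoxeterSystem M W) (u v a b : W) : Prop :=
  absLe cs a b ∧ a ≠ b ∧
    ∀ w : W, absLe cs u w → absLe cs w v → absLe cs a w → absLe cs w b →
      w = a ∨ w = b

/-!
If `a ⪯ b` and `a ≠ b`, write `a⁻¹ b = t r` as a product of `ℓ_T (a⁻¹ b)` reflections with first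
factor `t`. Subadditivity of `ℓ_T` squeezes `ℓ_T b ≤ ℓ_T (a t) + ℓ_T r ≤ (ℓ_T a + 1) + (ℓ_T (a⁻¹ b) - 1)`
into equalities, so `a ⪯ a t ⪯ b` with `ℓ_T (a t) = ℓ_T a + 1`. Hence a cover `a ⋖ b` of `[u, v]`
has `b = a t`, so `ℓ_T` goes up by exactly one along every maximal chain.
-/

theorem List.IsChain.apply_getLast_add_one_eq {α : Type*} {f : α → ℕ} {l : List α}
    (h : l.IsChain fun a b => f b = f a + 1) {a b : α}
    (ha : l.head? = some a) (hb : l.getLast? = some b) :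
    f b + 1 = f a + l.length := by
  induction l generalizing a with
  | nil => simp at ha
  | cons x l ih =>
    obtain rfl : x = a := by simpa using ha
    cases l with
    | nil =>
      obtain rfl : x = b := by simpa using hb
      simp
    | cons y l =>
      rw [List.isChain_cons_cons] at h
      have := ih h.2 rfl (by simpa using hb)
      simp only [List.length_cons] at this ⊢
      omega

section

variable (cs : CoxeterSystem M W)

theorem absLen_le_length {w : W} {l : List W} (hl : ∀ t ∈ l, cs.IsReflection t)
    (hw : l.prod = w) : absLen cs w ≤ l.length :=
  Nat.sInf_le ⟨l, rfl, hl, hw⟩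

theorem exists_length_eq_absLen (w : W) :
    ∃ l : List W, l.length = absLen cs w ∧ (∀ t ∈ l, cs.IsReflection t) ∧ l.prod = w := by
  show absLen cs w ∈ {k | ∃ l : List W, l.length = k ∧ (∀ t ∈ l, cs.IsReflection t) ∧ l.prod = w}
  refine Nat.sInf_mem ?_
  obtain ⟨ω, rfl⟩ := cs.wordProd_surjective w
  refine ⟨_, ω.map cs.simple, rfl, ?_, rfl⟩
  simp only [List.mem_map]
  rintro _ ⟨i, -, rfl⟩
  exact cs.isReflection_simple i

theorem absLen_mul_le (x y : W) : absLen cs (x * y) ≤ absLen cs x + absLen cs y := by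
  obtain ⟨l₁, hlen₁, hrefl₁, rfl⟩ := exists_length_eq_absLen cs x
  obtain ⟨l₂, hlen₂, hrefl₂, rfl⟩ := exists_length_eq_absLen cs y
  rw [← hlen₁, ← hlen₂, ← List.length_append]
  refine absLen_le_length cs ?_ List.prod_append
  simpa only [List.mem_append] using fun t ht => ht.elim (hrefl₁ t) (hrefl₂ t)

theorem absLen_le_add_absLen_inv_mul (x y : W) :
    absLen cs y ≤ absLen cs x + absLen cs (x⁻¹ * y) := by
  simpa using absLen_mul_le cs x (x⁻¹ * y)

theorem absLe_trans {x y z : W} (hxy : absLe cs x y) (hyz : absLe cs y z) : absLe cs x z := by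
  unfold absLe at *
  have hxz : absLen cs (x⁻¹ * z) ≤ absLen cs (x⁻¹ * y) + absLen cs (y⁻¹ * z) := by
    simpa [mul_assoc] using absLen_mul_le cs (x⁻¹ * y) (y⁻¹ * z)
  have := absLen_le_add_absLen_inv_mul cs x z
  omega

theorem exists_absLe_absLen_eq_add_one {a b : W} (hab : absLe cs a b) (hne : a ≠ b) :
    ∃ c, absLe cs a c ∧ absLe cs c b ∧ absLen cs c = absLen cs a + 1 := by
  obtain ⟨_ | ⟨t, r⟩, hlen, hrefl, hprod⟩ := exists_length_eq_absLen cs (a⁻¹ * b)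
  · exact absurd (inv_mul_eq_one.mp hprod.symm) hne
  have ht : absLen cs t ≤ 1 :=
    absLen_le_length cs (l := [t]) (by simpa using hrefl t List.mem_cons_self) (by simp)
  have hr : absLen cs ((a * t)⁻¹ * b) ≤ r.length := by
    refine absLen_le_length cs (fun x hx => hrefl x (List.mem_cons_of_mem t hx)) ?_
    rw [mul_inv_rev, mul_assoc, ← hprod, List.prod_cons, inv_mul_cancel_left]
  have hat := absLen_mul_le cs a t
  have hb := absLen_le_add_absLen_inv_mul cs (a * t) b
  unfold absLe at hab ⊢
  simp only [List.length_cons] at hlen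
  refine ⟨a * t, ?_, ?_, ?_⟩
  · rw [inv_mul_cancel_left]
    omega
  all_goals omega

theorem absLen_eq_add_one_of_absCovByIn {u v a b : W} (hua : absLe cs u a) (hbv : absLe cs b v)
    (h : absCovByIn cs u v a b) : absLen cs b = absLen cs a + 1 := by
  obtain ⟨hab, hne, hmax⟩ := h
  obtain ⟨c, hac, hcb, hc⟩ := exists_absLe_absLen_eq_add_one cs hab hne
  rcases hmax c (absLe_trans cs hua hac) (absLe_trans cs hcb hbv) hac hcb with rfl | rfl
  · omega
  · exact hc

end

theorem absolute_order_graded_general (cs : CoxeterSystem M W) (u v : W)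
    (l : List W)
    (hhead : l.head? = some u) (hlast : l.getLast? = some v)
    (hmem : ∀ x ∈ l, absLe cs u x ∧ absLe cs x v)
    (hchain : l.Chain' (absCovByIn cs u v)) :
    l.length = absLen cs v - absLen cs u + 1 := by
  have hstep : l.IsChain fun a b => absLen cs b = absLen cs a + 1 :=
    hchain.imp_of_mem_imp fun a b ha hb hab =>
      absLen_eq_add_one_of_absCovByIn cs (hmem a ha).1 (hmem b hb).2 hab
  have hlen := hstep.apply_getLast_add_one_eq hhead hlast
  have hpos := List.length_pos_of_mem (List.mem_of_mem_head? hhead)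
  omega

/-- The absolute order on a finite Coxeter group is graded with rank function
`ℓ_T`: if `u ⪯ v`, then every maximal chain of the interval `[u, v]` (i.e.
every chain from `u` to `v` whose consecutive members are covers in the
interval) has length `ℓ_T v - ℓ_T u`. -/
theorem absolute_order_graded [Finite W] (cs : CoxeterSystem M W) (u v : W)
    (huv : absLe cs u v) (l : List W)
    (hhead : l.head? = some u) (hlast : l.getLast? = some v)
    (hmem : ∀ x ∈ l, absLe cs u x ∧ absLe cs x v)
    (hchain : l.Chain' (absCovByIn cs u v)) :
    l.length = absLen cs v - absLen cs u + 1 :=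
  absolute_order_graded_general cs u v l hhead hlast hmem hchain
end

section
/- If Δ is a constructible simplicial complex, then the link of every face of Δ is constructible. -/
/-!
Taking links commutes with unions and intersections of complexes, and the link of a face `F`
in a simplex on `s` is the simplex on `s \ F`. So induction along the constructible
decomposition shows that the link of a face `F` in a `d`-dimensional constructible complex is
constructible of dimension `d - |F|`; in the union step, if `F` lies in only one of the two
pieces, the link is just its link in that piece.
-/

open scoped BigOperators

/-- A (finite, abstract) simplicial complex on vertex set `V`:
a collection of finite subsets of `V` closed under taking subsets. -/
structure SC (V : Type*) where
  faces : Set (Finset V)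
  down : ∀ ⦃s t : Finset V⦄, s ∈ faces → t ⊆ s → t ∈ faces

namespace SC

variable {V : Type*}

/-- The union of two simplicial complexes. -/
def union (Δ₁ Δ₂ : SC V) : SC V :=
  ⟨Δ₁.faces ∪ Δ₂.faces, by
    rintro s t (h | h) hts
    · exact Or.inl (Δ₁.down h hts)
    · exact Or.inr (Δ₂.down h hts)⟩

/-- The intersection of two simplicial complexes. -/
def inter (Δ₁ Δ₂ : SC V) : SC V :=
  ⟨Δ₁.faces ∩ Δ₂.faces, fun _ _ h hts => ⟨Δ₁.down h.1 hts, Δ₂.down h.2 hts⟩⟩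

/-- The simplex on a finite vertex set `s`: all subsets of `s`. -/
def simplex (s : Finset V) : SC V :=
  ⟨{t | t ⊆ s}, fun _ _ h h' => h'.trans h⟩

/-- The link of a face `F`: `{G \ F : G ∈ Δ, F ⊆ G}`. -/
def link [DecidableEq V] (Δ : SC V) (F : Finset V) : SC V :=
  ⟨{G | Disjoint G F ∧ G ∪ F ∈ Δ.faces}, by
    rintro s t ⟨hd, hm⟩ hts
    exact ⟨hd.mono_left hts, Δ.down hm (Finset.union_subset_union hts le_rfl)⟩⟩

/-- The dimension of a simplicial complex, as an integer
(the complex `{∅}` has dimension `-1`). -/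
noncomputable def dim (Δ : SC V) : ℤ :=
  sSup ((fun s : Finset V => (s.card : ℤ) - 1) '' Δ.faces)

/-- The geometric realization of a simplicial complex on a finite vertex set,
as a subspace of `V → ℝ`. -/
def realization [Fintype V] (Δ : SC V) : Set (V → ℝ) :=
  {f | (∀ v, 0 ≤ f v) ∧ (∑ v, f v) = 1 ∧ ∃ s ∈ Δ.faces, ∀ v, f v ≠ 0 → v ∈ s}

end SC

/-- Constructibility (generalized): a `d`-dimensional complex is constructible
if it is a simplex, or the union of two `d`-dimensional constructible complexes
whose intersection is constructible of dimension at least `d - 1`. -/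
inductive Constructible {V : Type*} : SC V → ℤ → Prop
  | simplex (s : Finset V) : Constructible (SC.simplex s) ((s.card : ℤ) - 1)
  | union {Δ₁ Δ₂ : SC V} {d e : ℤ} : Constructible Δ₁ d → Constructible Δ₂ d →
      d - 1 ≤ e → Constructible (SC.inter Δ₁ Δ₂) e →
      Constructible (SC.union Δ₁ Δ₂) d

/-- A topological space is `k`-connected if it is nonempty (for `k ≥ -1`) and
all its homotopy groups `π_i` vanish for `0 ≤ i ≤ k`, at every basepoint. -/
def KConnected (k : ℤ) (X : Type*) [TopologicalSpace X] : Prop :=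
  (-1 ≤ k → Nonempty X) ∧
    ∀ (x : X) (i : ℕ), (i : ℤ) ≤ k → Subsingleton (HomotopyGroup (Fin i) X x)

namespace SC

variable {V : Type*}

@[ext]
theorem ext {Δ₁ Δ₂ : SC V} (h : Δ₁.faces = Δ₂.faces) : Δ₁ = Δ₂ := by
  cases Δ₁; cases Δ₂; simp_all

variable [DecidableEq V]

theorem link_union (A B : SC V) (F : Finset V) :
    (A.union B).link F = (A.link F).union (B.link F) := by
  ext G
  simp only [link, union, Set.mem_ofPred_eq, Set.mem_union]
  tauto

theorem link_inter (A B : SC V) (F : Finset V) :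
    (A.inter B).link F = (A.link F).inter (B.link F) := by
  ext G
  simp only [link, inter, Set.mem_ofPred_eq, Set.mem_inter_iff]
  tauto

theorem link_union_of_notMem_right {A B : SC V} {F : Finset V} (hFB : F ∉ B.faces) :
    (A.union B).link F = A.link F := by
  ext G
  simp only [link, union, Set.mem_ofPred_eq, Set.mem_union]
  have : G ∪ F ∉ B.faces := fun h => hFB (B.down h Finset.subset_union_right)
  tauto

theorem link_union_of_notMem_left {A B : SC V} {F : Finset V} (hFA : F ∉ A.faces) :
    (A.union B).link F = B.link F := by
  ext G
  simp only [link, union, Set.mem_ofPred_eq, Set.mem_union]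
  have : G ∪ F ∉ A.faces := fun h => hFA (A.down h Finset.subset_union_right)
  tauto

theorem link_simplex {s F : Finset V} (hF : F ⊆ s) :
    (simplex s).link F = simplex (s \ F) := by
  ext G
  simp only [link, simplex, Set.mem_ofPred_eq, Finset.subset_sdiff, Finset.union_subset_iff,
    disjoint_comm (a := G)]
  tauto

end SC

theorem Constructible.link {V : Type*} [DecidableEq V] {Δ : SC V} {d : ℤ}
    (h : Constructible Δ d) {F : Finset V} (hF : F ∈ Δ.faces) :
    Constructible (Δ.link F) (d - F.card) := by
  induction h generalizing F with
  | simplex s =>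
    have hFs : F ⊆ s := hF
    rw [SC.link_simplex hFs]
    convert Constructible.simplex (s \ F) using 1
    rw [Finset.card_sdiff_of_subset hFs, Nat.cast_sub (Finset.card_le_card hFs)]
    ring
  | @union Δ₁ Δ₂ d e _ _ hde _ ih₁ ih₂ ihI =>
    by_cases hF₁ : F ∈ Δ₁.faces <;> by_cases hF₂ : F ∈ Δ₂.faces
    · rw [SC.link_union]
      refine .union (ih₁ hF₁) (ih₂ hF₂) (e := e - F.card) (by omega) ?_
      rw [← SC.link_inter]
      exact ihI ⟨hF₁, hF₂⟩
    · rw [SC.link_union_of_notMem_right hF₂]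
      exact ih₁ hF₁
    · rw [SC.link_union_of_notMem_left hF₁]
      exact ih₂ hF₂
    · exact (hF.elim hF₁ hF₂).elim

/-- The link of any face of a constructible simplicial complex is
constructible. -/
theorem constructible_link {V : Type*} [DecidableEq V] (Δ : SC V) (d : ℤ)
    (h : Constructible Δ d) (F : Finset V) (hF : F ∈ Δ.faces) :
    ∃ e : ℤ, Constructible (SC.link Δ F) e :=
  ⟨d - F.card, h.link hF⟩
end

section
/- Let P be a finite poset of rank d with a minimum element. If P is the union of strongly constructible order ideals I₁, ..., I_k of rank d such that the intersection of any two or more of these ideals is strongly constructible of rank d−1, then P is strongly constructible. -/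
open scoped BigOperators

namespace SC

/-- The order complex of a poset `P`: the simplicial complex whose faces are
the finite chains of `P`. -/
def orderComplex (P : Type*) [PartialOrder P] : SC P :=
  ⟨{s | ∀ a ∈ s, ∀ b ∈ s, a ≤ b ∨ b ≤ a},
    fun s t hs hts a ha b hb => hs a (hts ha) b (hts hb)⟩

end SC

/-- A simplicial complex is pure shellable of dimension `d` if its facets all
have dimension `d` and can be listed as `G₁, …, G_m` so that for `i > 1` the
intersection of `G₁ ∪ ⋯ ∪ G_{i-1}` with `G_i` is pure of dimension `d - 1`. -/
def PureShellable {V : Type*} (Δ : SC V) (d : ℕ) : Prop :=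
  ∃ (m : ℕ) (G : Fin m → Finset V), 0 < m ∧
    (∀ i, G i ∈ Δ.faces ∧ (G i).card = d + 1) ∧
    (∀ s ∈ Δ.faces, ∃ i, s ⊆ G i) ∧
    ∀ i : Fin m, 0 < (i : ℕ) →
      ∀ s ⊆ G i, (∃ j, j < i ∧ s ⊆ G j) →
        ∃ t, t ⊆ G i ∧ (∃ j, j < i ∧ t ⊆ G j) ∧ t.card = d ∧ s ⊆ t

/-- A poset has rank `d` if its longest chains have `d + 1` elements. -/
def HasRank (P : Type*) [Preorder P] (d : ℕ) : Prop :=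
  (∃ l : List P, l.Chain' (· < ·) ∧ l.length = d + 1) ∧
    ∀ l : List P, l.Chain' (· < ·) → l.length ≤ d + 1

/-- Strong constructibility: a finite poset `P` of rank `d` with a minimum
element is strongly constructible if it is bounded and pure shellable, or it is
the union of two strongly constructible proper order ideals of rank `d` whose
intersection is strongly constructible of rank at least `d - 1`. -/
inductive SConstr : ∀ (P : Type) [PartialOrder P], ℕ → Prop
  | base (P : Type) [PartialOrder P] [Finite P] (d : ℕ)
      (hbot : ∃ m : P, ∀ x, m ≤ x) (htop : ∃ M : P, ∀ x, x ≤ M)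
      (hshell : PureShellable (SC.orderComplex P) d) : SConstr P d
  | union (P : Type) [PartialOrder P] [Finite P] (d e : ℕ) (I₁ I₂ : Set P)
      (hmin : ∃ m : P, ∀ x, m ≤ x) (hrank : HasRank P d)
      (hl1 : IsLowerSet I₁) (hl2 : IsLowerSet I₂)
      (hp1 : I₁ ≠ Set.univ) (hp2 : I₂ ≠ Set.univ)
      (hcover : I₁ ∪ I₂ = Set.univ)
      (hr1 : HasRank I₁ d) (hr2 : HasRank I₂ d)
      (hc1 : SConstr I₁ d) (hc2 : SConstr I₂ d)
      (he : d - 1 ≤ e)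
      (hre : HasRank ↥(I₁ ∩ I₂) e) (hce : SConstr ↥(I₁ ∩ I₂) e) :
      SConstr P d

/-!
Induct on the number of ideals. Write `P = J ∪ Iₖ` with `J = I₁ ∪ ⋯ ∪ Iₖ₋₁`; if one of the two
contains the other there is nothing to do. Otherwise `J` is strongly constructible by induction, and
so is `J ∩ Iₖ = ⋃ᵢ (Iᵢ ∩ Iₖ)`, because the ideals `Iᵢ ∩ Iₖ` and all their intersections are
intersections of at least two of the original ideals. One union step then finishes.
-/

section Rank

variable {X Y : Type*} [Preorder X] [Preorder Y] {r : ℕ}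

theorem StrictMono.isChain_map {f : X → Y} (hf : StrictMono f) {l : List X}
    (hl : l.IsChain (· < ·)) : (l.map f).IsChain (· < ·) :=
  List.isChain_map_of_isChain f (fun _ _ h => hf h) hl

theorem HasRank.nonempty (h : HasRank X r) : Nonempty X := by
  obtain ⟨⟨_ | ⟨a, _⟩, _, hlen⟩, _⟩ := h
  · simp at hlen
  · exact ⟨a⟩

theorem HasRank.of_orderIso (f : X ≃o Y) (h : HasRank X r) : HasRank Y r := by
  obtain ⟨⟨l, hl, hlen⟩, hbound⟩ := h
  refine ⟨⟨l.map f, f.strictMono.isChain_map hl, by simp [hlen]⟩, fun l hl => ?_⟩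
  simpa using hbound _ (f.symm.strictMono.isChain_map hl)

theorem HasRank.length_le_of_forall_mem {A : Set X} (h : HasRank A r) {l : List X}
    (hl : l.IsChain (· < ·)) (hA : ∀ x ∈ l, x ∈ A) : l.length ≤ r + 1 := by
  simpa using h.2 (l.pmap Subtype.mk hA)
    (List.isChain_pmap_of_isChain (f := (⟨·, ·⟩ : ∀ x, x ∈ A → A)) (fun _ _ _ _ h => h) hl hA)

/-- A chain ends at its largest element, so a chain of `A ∪ B` lies entirely in `A` or in `B`. -/
theorem HasRank.union {A B : Set X} (hA : IsLowerSet A) (hB : IsLowerSet B)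
    (hrA : HasRank A r) (hrB : HasRank B r) : HasRank ↥(A ∪ B) r := by
  obtain ⟨l, hl, hlen⟩ := hrA.1
  have hincl : StrictMono (Set.inclusion (Set.subset_union_left : A ⊆ A ∪ B)) := fun _ _ h => h
  refine ⟨⟨l.map (Set.inclusion _), hincl.isChain_map hl, by simp [hlen]⟩, fun l hl => ?_⟩
  by_cases hnil : l = []
  · simp [hnil]
  have hne : l.map Subtype.val ≠ [] := mt List.map_eq_nil_iff.1 hnil
  have hl' : (l.map Subtype.val).IsChain (· < ·) := Subtype.strictMono_coe _ |>.isChain_map hl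
  have lower_closed {C : Set X} (hC : IsLowerSet C) (hlast : (l.map Subtype.val).getLast hne ∈ C) :
      ∀ x ∈ l.map Subtype.val, x ∈ C :=
    hl'.backwards_induction (· ∈ C) _ (fun _ _ hxy hy => hC hxy.le hy) (fun _ => hlast)
  obtain ⟨y, -, hy⟩ := List.mem_map.1 (List.getLast_mem hne)
  rw [← List.length_map Subtype.val]
  rcases y.2 with hyA | hyB
  · exact hrA.length_le_of_forall_mem hl' (lower_closed hA (hy ▸ hyA))
  · exact hrB.length_le_of_forall_mem hl' (lower_closed hB (hy ▸ hyB))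

end Rank

section Transport

variable {P Q : Type*} [PartialOrder P] [PartialOrder Q]

def OrderIso.setImage (f : P ≃o Q) (s : Set P) : s ≃o f '' s where
  toEquiv := f.toEquiv.image s
  map_rel_iff' := f.le_iff_le

def OrderIso.preimageVal {S A : Set P} (h : A ⊆ S) : ↥(Subtype.val ⁻¹' A : Set S) ≃o A where
  toEquiv := Equiv.subtypeSubtypeEquivSubtype (h ·)
  map_rel_iff' := Iff.rfl

theorem PureShellable.of_orderIso (f : P ≃o Q) {d : ℕ}
    (h : PureShellable (SC.orderComplex P) d) : PureShellable (SC.orderComplex Q) d := by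
  obtain ⟨m, G, hm, hG, hcover, hshell⟩ := h
  let F := f.toEquiv.finsetCongr
  have F_subset {s t : Finset P} : F s ⊆ F t ↔ s ⊆ t := Finset.map_subset_map
  have F_card (s : Finset P) : (F s).card = s.card := Finset.card_map _
  have F_face {s : Finset P} : F s ∈ (SC.orderComplex Q).faces ↔ s ∈ (SC.orderComplex P).faces := by
    simp [F, SC.orderComplex, -Finset.mem_map_equiv]
  refine ⟨m, F ∘ G, hm, fun i => ⟨F_face.2 (hG i).1, (F_card _).trans (hG i).2⟩, ?_, ?_⟩
  · intro s hs
    obtain ⟨s, rfl⟩ := F.surjective s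
    obtain ⟨i, hi⟩ := hcover s (F_face.1 hs)
    exact ⟨i, F_subset.2 hi⟩
  · rintro i hi s hsi ⟨j, hji, hsj⟩
    obtain ⟨s, rfl⟩ := F.surjective s
    obtain ⟨t, hti, ⟨j', hj'i, htj'⟩, htcard, hst⟩ :=
      hshell i hi s (F_subset.1 hsi) ⟨j, hji, F_subset.1 hsj⟩
    exact ⟨F t, F_subset.2 hti, ⟨j', hj'i, F_subset.2 htj'⟩, (F_card t).trans htcard,
      F_subset.2 hst⟩

end Transport

theorem SConstr.of_orderIso {P : Type} [PartialOrder P] {d : ℕ} (h : SConstr P d) {Q : Type}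
    [PartialOrder Q] (f : P ≃o Q) : SConstr Q d := by
  induction h generalizing Q with
  | base P d hbot htop hshell =>
    have : Finite Q := .of_equiv P f.toEquiv
    obtain ⟨m, hm⟩ := hbot
    obtain ⟨M, hM⟩ := htop
    exact .base Q d ⟨f m, fun x => f.le_symm_apply.1 (hm _)⟩
      ⟨f M, fun x => f.symm_apply_le.1 (hM _)⟩ (hshell.of_orderIso f)
  | union P d e I₁ I₂ hmin hrank hl1 hl2 hp1 hp2 hcover hr1 hr2 _ _ he hre _ ih1 ih2 ihe =>
    have : Finite Q := .of_equiv P f.toEquiv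
    obtain ⟨m, hm⟩ := hmin
    have himage_inter : f '' I₁ ∩ f '' I₂ = f '' (I₁ ∩ I₂) := (Set.image_inter f.injective).symm
    have himage_ne_univ {I : Set P} (hI : I ≠ Set.univ) : f '' I ≠ Set.univ := by
      rwa [Ne, ← f.surjective.range_eq, ← Set.image_univ, f.injective.image_injective.eq_iff]
    refine .union Q d e (f '' I₁) (f '' I₂) ⟨f m, fun x => f.le_symm_apply.1 (hm _)⟩
      (hrank.of_orderIso f) (hl1.image f) (hl2.image f) (himage_ne_univ hp1) (himage_ne_univ hp2)
      (by rw [← Set.image_union, hcover, Set.image_univ, f.surjective.range_eq])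
      (hr1.of_orderIso (f.setImage I₁)) (hr2.of_orderIso (f.setImage I₂))
      (ih1 (f.setImage I₁)) (ih2 (f.setImage I₂)) he ?_ ?_
    · rw [himage_inter]; exact hre.of_orderIso (f.setImage _)
    · rw [himage_inter]; exact ihe (f.setImage _)

section Cover

variable {P : Type} [PartialOrder P] [OrderBot P] [Finite P] {r e : ℕ}

theorem SConstr.union_of_isLowerSet {A B : Set P} (hA : IsLowerSet A) (hB : IsLowerSet B)
    (hrA : HasRank A r) (hrB : HasRank B r) (hcA : SConstr A r) (hcB : SConstr B r)
    (he : r - 1 ≤ e) (hrAB : HasRank ↥(A ∩ B) e) (hcAB : SConstr ↥(A ∩ B) e) :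
    SConstr ↥(A ∪ B) r := by
  by_cases hBA : B ⊆ A
  · rwa [Set.union_eq_left.2 hBA]
  by_cases hAB : A ⊆ B
  · rwa [Set.union_eq_right.2 hAB]
  have hbot : (⊥ : P) ∈ A := hA.bot_mem.2 (Set.nonempty_coe_sort.1 hrA.nonempty)
  have hne_univ {C D : Set P} (hD : D ⊆ A ∪ B) (hDC : ¬D ⊆ C) :
      (Subtype.val ⁻¹' C : Set ↥(A ∪ B)) ≠ Set.univ :=
    fun h => hDC fun x hx => Set.eq_univ_iff_forall.1 h ⟨x, hD hx⟩
  have hAB_sub : A ∩ B ⊆ A ∪ B := Set.inter_subset_left.trans Set.subset_union_left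
  refine .union _ r e (Subtype.val ⁻¹' A) (Subtype.val ⁻¹' B) ⟨⟨⊥, .inl hbot⟩, fun _ => bot_le⟩
    (hrA.union hA hB hrB) (hA.preimage (Subtype.mono_coe _)) (hB.preimage (Subtype.mono_coe _))
    (hne_univ Set.subset_union_right hBA) (hne_univ Set.subset_union_left hAB)
    (Set.eq_univ_of_forall fun x => x.2)
    (hrA.of_orderIso (OrderIso.preimageVal Set.subset_union_left).symm)
    (hrB.of_orderIso (OrderIso.preimageVal Set.subset_union_right).symm)
    (hcA.of_orderIso (OrderIso.preimageVal Set.subset_union_left).symm)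
    (hcB.of_orderIso (OrderIso.preimageVal Set.subset_union_right).symm) he
    (hrAB.of_orderIso (OrderIso.preimageVal hAB_sub).symm)
    (hcAB.of_orderIso (OrderIso.preimageVal hAB_sub).symm)

theorem hasRank_and_sconstr_biUnion {ι : Type*} [DecidableEq ι] {s : Finset ι} (hs : s.Nonempty)
    (I : ι → Set P) (he : r - 1 ≤ e) (hlow : ∀ i ∈ s, IsLowerSet (I i))
    (hrank : ∀ i ∈ s, HasRank ↥(I i) r) (hc : ∀ i ∈ s, SConstr ↥(I i) r)
    (hint : ∀ S ⊆ s, 2 ≤ S.card → HasRank ↥(⋂ i ∈ S, I i) e ∧ SConstr ↥(⋂ i ∈ S, I i) e) :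
    HasRank ↥(⋃ i ∈ s, I i) r ∧ SConstr ↥(⋃ i ∈ s, I i) r := by
  induction hs using Finset.Nonempty.cons_induction generalizing I r e with
  | singleton a =>
    rw [Finset.set_biUnion_singleton]
    exact ⟨hrank a (Finset.mem_singleton_self a), hc a (Finset.mem_singleton_self a)⟩
  | cons a t ha _ ih =>
    simp only [Finset.mem_cons, forall_eq_or_imp] at hlow hrank hc
    rw [Finset.cons_eq_insert] at hint ⊢
    rw [Finset.set_biUnion_insert]
    have hJ := ih I he hlow.2 hrank.2 hc.2 fun S hS => hint S (hS.trans (Finset.subset_insert a t))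
    have hint_inter (S : Finset ι) (hS : S ⊆ t) (hSne : S.Nonempty) :
        HasRank ↥(⋂ i ∈ S, I a ∩ I i) e ∧ SConstr ↥(⋂ i ∈ S, I a ∩ I i) e := by
      have hcard : 2 ≤ (insert a S).card := by
        rw [Finset.card_insert_of_notMem fun haS => ha (hS haS)]
        have := hSne.card_pos
        omega
      have hinter : ⋂ i ∈ S, I a ∩ I i = ⋂ i ∈ insert a S, I i := by
        simpa using Set.inter_biInter (Finset.coe_nonempty.2 hSne) I (I a)
      rw [hinter]
      exact hint (insert a S) (Finset.insert_subset_insert a hS) hcard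
    have hint_pair (i : ι) (hi : i ∈ t) : HasRank ↥(I a ∩ I i) e ∧ SConstr ↥(I a ∩ I i) e := by
      have := hint_inter {i} (Finset.singleton_subset_iff.2 hi) (Finset.singleton_nonempty i)
      rwa [Finset.set_biInter_singleton] at this
    have hK := ih (fun i => I a ∩ I i) (Nat.sub_le e 1) (fun i hi => hlow.1.inter (hlow.2 i hi))
      (fun i hi => (hint_pair i hi).1) (fun i hi => (hint_pair i hi).2)
      fun S hS hcard => hint_inter S hS (Finset.card_pos.1 (by omega))
    rw [← Set.inter_iUnion₂] at hK
    exact ⟨hrank.1.union hlow.1 (isLowerSet_iUnion₂ hlow.2) hJ.1,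
      .union_of_isLowerSet hlow.1 (isLowerSet_iUnion₂ hlow.2) hrank.1 hJ.1 hc.1 hJ.2 he hK.1 hK.2⟩

end Cover

theorem sconstr_of_ideal_cover_general (P : Type) [PartialOrder P] [Finite P]
    (d : ℕ) (hmin : ∃ m : P, ∀ x : P, m ≤ x)
    (k : ℕ) (hk : 0 < k) (I : Fin k → Set P)
    (hlow : ∀ i, IsLowerSet (I i))
    (hcover : (⋃ i, I i) = Set.univ)
    (hranks : ∀ i, HasRank ↥(I i) d)
    (hc : ∀ i, SConstr ↥(I i) d)
    (hint : ∀ S : Finset (Fin k), 2 ≤ S.card →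
      HasRank ↥(⋂ i ∈ S, I i) (d - 1) ∧ SConstr ↥(⋂ i ∈ S, I i) (d - 1)) :
    SConstr P d := by
  obtain ⟨m, hm⟩ := hmin
  let _ : OrderBot P := { bot := m, bot_le := hm }
  have hunion := (hasRank_and_sconstr_biUnion (Finset.univ_nonempty_iff.2 ⟨⟨0, hk⟩⟩) I le_rfl
    (fun i _ => hlow i) (fun i _ => hranks i) (fun i _ => hc i) fun S _ => hint S).2
  rw [show ⋃ i ∈ Finset.univ, I i = Set.univ by simpa using hcover] at hunion
  exact hunion.of_orderIso OrderIso.Set.univ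

/-- Let `P` be a finite poset of rank `d` with a minimum element. If `P` is the
union of strongly constructible order ideals `I₁, …, I_k` of rank `d` such that
the intersection of any two or more of these ideals is strongly constructible
of rank `d - 1`, then `P` is strongly constructible. -/
theorem sconstr_of_ideal_cover (P : Type) [PartialOrder P] [Finite P]
    (d : ℕ) (hmin : ∃ m : P, ∀ x : P, m ≤ x) (hrank : HasRank P d)
    (k : ℕ) (hk : 0 < k) (I : Fin k → Set P)
    (hlow : ∀ i, IsLowerSet (I i))
    (hcover : (⋃ i, I i) = Set.univ)
    (hranks : ∀ i, HasRank ↥(I i) d)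
    (hc : ∀ i, SConstr ↥(I i) d)
    (hint : ∀ S : Finset (Fin k), 2 ≤ S.card →
      HasRank ↥(⋂ i ∈ S, I i) (d - 1) ∧ SConstr ↥(⋂ i ∈ S, I i) (d - 1)) :
    SConstr P d :=
  sconstr_of_ideal_cover_general P d hmin k hk I hlow hcover hranks hc hint
end
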